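/- Let T > 0, let H : [0,T]^2 → ℝ, and suppose there exists t* ∈ [0,T) such that H is continuous at the point (t*, t*) and H(t*, t*) > 0. Let h : ℝ → ℝ be a continuous, odd function that is not linear, i.e., there is no q ∈ ℝ with h(x) = q x for all x ∈ ℝ. Then for every integer M ≥ 3 there exist points t_0 < t_1 < … < t_{M-1} in [0,T] and real numbers x_0, …, x_{M-1} such that ∑_{i=0}^{M-1} ∑_{j=0}^{M-1} x_i · H(t_i, t_j) · h(x_j) < 0. -/

import Mathlib

/-!
A continuous additive function on `ℝ` is linear, so `h` fails additivity at some `(a, b)`; by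
oddness the trades `a + e, b, -(a + b)` then have `∑ h(x_i)` bounded away from `0` while `∑ x_i = e`
can be given either sign, so `(∑ x_i) (∑ h(x_i)) < 0`. For times clustered near `t*` the double
sum tends to `H(t*, t*) (∑ x_i) (∑ h(x_j))`, hence is eventually negative.
-/

open Filter Topology

theorem exists_map_add_ne_of_not_linear {h : ℝ → ℝ} (hh : Continuous h)
    (hlin : ¬ ∃ q : ℝ, ∀ x : ℝ, h x = q * x) : ∃ a b : ℝ, h (a + b) ≠ h a + h b := by
  by_contra! hadd
  let f : ℝ →+ ℝ := AddMonoidHom.mk' h hadd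
  exact hlin ⟨h 1, fun x => by simpa [f, mul_comm] using map_real_smul f hh x 1⟩

theorem exists_mul_neg_of_continuousAt {f : ℝ → ℝ} (hf : ContinuousAt f 0) (hf0 : f 0 ≠ 0) :
    ∃ e : ℝ, e * f e < 0 := by
  rcases hf0.lt_or_gt with hneg | hpos
  · obtain ⟨e, hfe, he : 0 < e⟩ := (((hf.eventually (gt_mem_nhds hneg)).filter_mono
      nhdsWithin_le_nhds).and eventually_mem_nhdsWithin : ∀ᶠ e in 𝓝[>] (0 : ℝ), _).exists
    exact ⟨e, mul_neg_of_pos_of_neg he hfe⟩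
  · obtain ⟨e, hfe, he : e < 0⟩ := (((hf.eventually (lt_mem_nhds hpos)).filter_mono
      nhdsWithin_le_nhds).and eventually_mem_nhdsWithin : ∀ᶠ e in 𝓝[<] (0 : ℝ), _).exists
    exact ⟨e, mul_neg_of_neg_of_pos he hfe⟩

theorem exists_sum_mul_sum_map_neg {h : ℝ → ℝ} (hh : Continuous h)
    (hodd : ∀ x : ℝ, h (-x) = -h x) (hlin : ¬ ∃ q : ℝ, ∀ x : ℝ, h x = q * x) :
    ∃ v : Fin 3 → ℝ, (∑ i, v i) * ∑ i, h (v i) < 0 := by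
  obtain ⟨a, b, hab⟩ := exists_map_add_ne_of_not_linear hh hlin
  have hcont : ContinuousAt (fun e => h (a + e) + h b + h (-(a + b))) 0 := by fun_prop
  have hdefect : h (a + 0) + h b + h (-(a + b)) ≠ 0 := by
    rw [add_zero, hodd]
    contrapose! hab
    linarith
  obtain ⟨e, he⟩ := exists_mul_neg_of_continuousAt hcont hdefect
  refine ⟨![a + e, b, -(a + b)], ?_⟩
  simp only [Fin.sum_univ_three, Matrix.cons_val]
  convert he using 2
  ring

theorem sum_map_append_zero {β : Type*} [AddCommMonoid β] {m n : ℕ} (v : Fin m → ℝ)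
    {g : ℝ → β} (hg : g 0 = 0) :
    ∑ i, g (Fin.append v (0 : Fin n → ℝ) i) = ∑ i, g (v i) := by
  simp [Fin.sum_univ_add, hg]

theorem exists_strictMono_double_sum_neg {H : ℝ → ℝ → ℝ} {tstar T : ℝ}
    (htstar : tstar ∈ Set.Ico 0 T)
    (hH : ContinuousAt (fun q : ℝ × ℝ => H q.1 q.2) (tstar, tstar)) {M : ℕ} {x y : Fin M → ℝ}
    (hneg : H tstar tstar * ((∑ i, x i) * ∑ j, y j) < 0) :
    ∃ t : Fin M → ℝ, StrictMono t ∧ (∀ i, t i ∈ Set.Icc 0 T) ∧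
      ∑ i, ∑ j, x i * H (t i) (t j) * y j < 0 := by
  set t : ℝ → Fin M → ℝ := fun τ i => tstar + τ * (i : ℕ)
  have hlim : Tendsto (fun τ => ∑ i, ∑ j, x i * H (t τ i) (t τ j) * y j) (𝓝 0)
      (𝓝 (H tstar tstar * ((∑ i, x i) * ∑ j, y j))) := by
    rw [Finset.sum_mul_sum, Finset.mul_sum]
    refine tendsto_finsetSum _ fun i _ => ?_
    rw [Finset.mul_sum]
    refine tendsto_finsetSum _ fun j _ => ?_
    have ht : Tendsto (fun τ => (t τ i, t τ j)) (𝓝 0) (𝓝 (tstar, tstar)) := by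
      have : Continuous (fun τ => (t τ i, t τ j)) := by fun_prop
      simpa [t] using this.tendsto 0
    convert (tendsto_const_nhds (x := x i)).mul ((hH.tendsto.comp ht).mul_const (y j)) using 1
    · ext τ
      simp only [Function.comp_apply]
      ring
    · rw [mul_left_comm]
  have hlast : Tendsto (fun τ : ℝ => tstar + τ * M) (𝓝 0) (𝓝 tstar) := by
    have : Continuous (fun τ : ℝ => tstar + τ * M) := by fun_prop
    simpa using this.tendsto 0
  obtain ⟨τ, ⟨hτneg, hτT⟩, hτ : 0 < τ⟩ := ((((hlim.eventually (gt_mem_nhds hneg)).and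
    (hlast.eventually (gt_mem_nhds htstar.2))).filter_mono nhdsWithin_le_nhds).and
      eventually_mem_nhdsWithin : ∀ᶠ τ in 𝓝[>] (0 : ℝ), _).exists
  refine ⟨t τ, fun i j hij => ?_, fun i => ⟨?_, ?_⟩, hτneg⟩
  · simp only [t]
    gcongr
    exact_mod_cast hij
  · have := htstar.1
    positivity
  · have : ((i : ℕ) : ℝ) ≤ M := by exact_mod_cast i.is_lt.le
    simp only [t] at hτT ⊢
    nlinarith

theorem price_manipulation_two_variable_kernel_general
    (T : ℝ)
    (H : ℝ → ℝ → ℝ) (tstar : ℝ) (htstar : tstar ∈ Set.Ico (0 : ℝ) T)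
    (hHcont : ContinuousAt (fun q : ℝ × ℝ => H q.1 q.2) (tstar, tstar))
    (hHpos : 0 < H tstar tstar)
    (h : ℝ → ℝ) (hhcont : Continuous h)
    (hhodd : ∀ x : ℝ, h (-x) = -h x)
    (hhnotlin : ¬ ∃ q : ℝ, ∀ x : ℝ, h x = q * x)
    (M : ℕ) (hM : 3 ≤ M) :
    ∃ t x : Fin M → ℝ, StrictMono t ∧ (∀ i, t i ∈ Set.Icc (0 : ℝ) T) ∧
      ∑ i : Fin M, ∑ j : Fin M, x i * H (t i) (t j) * h (x j) < 0 := by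
  obtain ⟨k, rfl⟩ := Nat.exists_eq_add_of_le hM
  obtain ⟨v, hv⟩ := exists_sum_mul_sum_map_neg hhcont hhodd hhnotlin
  have h0 : h 0 = 0 := by linarith [neg_zero (G := ℝ) ▸ hhodd 0]
  set x : Fin (3 + k) → ℝ := Fin.append v 0
  have hsum : ∑ i, x i = ∑ i, v i := sum_map_append_zero v (g := id) rfl
  have hsum_h : ∑ i, h (x i) = ∑ i, h (v i) := sum_map_append_zero v h0
  have hneg : H tstar tstar * ((∑ i, x i) * ∑ j, h (x j)) < 0 := by
    rw [hsum, hsum_h]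
    exact mul_neg_of_pos_of_neg hHpos hv
  obtain ⟨t, ht_mono, ht_mem, hcost⟩ := exists_strictMono_double_sum_neg htstar hHcont hneg
  exact ⟨t, x, ht_mono, ht_mem, hcost⟩

/-- **Price manipulation for two-variable impact kernels (Theorem, part 1).**
Let `T > 0`, `H : [0,T]² → ℝ`, and suppose there is `t* ∈ [0,T)` such that `H` is
continuous at `(t*, t*)` with `H(t*,t*) > 0`.  Let `h : ℝ → ℝ` be a continuous, odd
function which is not linear.  Then for every `M ≥ 3` there exist points
`t_0 < … < t_{M-1}` in `[0,T]` and reals `x_0, …, x_{M-1}` such that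
`∑_{i,j} x_i · H(t_i,t_j) · h(x_j) < 0`. -/
theorem price_manipulation_two_variable_kernel
    (T : ℝ) (hT : 0 < T)
    (H : ℝ → ℝ → ℝ) (tstar : ℝ) (htstar : tstar ∈ Set.Ico (0 : ℝ) T)
    (hHcont : ContinuousAt (fun q : ℝ × ℝ => H q.1 q.2) (tstar, tstar))
    (hHpos : 0 < H tstar tstar)
    (h : ℝ → ℝ) (hhcont : Continuous h)
    (hhodd : ∀ x : ℝ, h (-x) = -h x)
    (hhnotlin : ¬ ∃ q : ℝ, ∀ x : ℝ, h x = q * x)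
    (M : ℕ) (hM : 3 ≤ M) :
    ∃ t x : Fin M → ℝ, StrictMono t ∧ (∀ i, t i ∈ Set.Icc (0 : ℝ) T) ∧
      ∑ i : Fin M, ∑ j : Fin M, x i * H (t i) (t j) * h (x j) < 0 :=
  price_manipulation_two_variable_kernel_general T H tstar htstar hHcont hHpos h hhcont hhodd
    hhnotlin M hM
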